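/- Let (c_n)_{n≥0} be an orthonormal basis of L²(ℝ), let ρ_f : ℝ → ℂ be measurable and nonzero a.e., set ρ_g = 1/conj(ρ_f), f_n = c_n·ρ_f, g_n = c_n·ρ_g, and V = {v ∈ L² : v·ρ_f ∈ L², v·ρ_g ∈ L²}. Let (α_n) be strictly increasing with α_0 = 0, ᾱ = sup_n α_n, and for |z| < ᾱ define N(|z|) = (Σ_{k≥0} |z|^{2k}/(α_k!)²)^{−1/2} and the linear functional F(z) on V by F(z)[v] = N(|z|)·Σ_{n≥0} (conj(z)ⁿ/α_n!)·⟨f_n, v⟩, and similarly G(z)[v] = N(|z|)·Σ_{n≥0} (conj(z)ⁿ/α_n!)·⟨g_n, v⟩. Then F(z) and G(z) are continuous with respect to the topology τ_V: whenever (v_k) ⊂ V and v ∈ V satisfy ‖v_k − v‖ → 0, ‖ρ_f·(v_k − v)‖ → 0 and ‖ρ_g·(v_k − v)‖ → 0, one has F(z)[v_k] → F(z)[v] and G(z)[v_k] → G(z)[v]. -/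

import Mathlib

/-!
The pairing `⟨c_n ρ, u⟩` equals `⟨c_n, conj ρ · u⟩`, so by Cauchy–Schwarz it is bounded by
`‖ρ u‖` uniformly in `n`. The coefficients `conj(z)ⁿ / α_n!` are absolutely summable by the ratio
test, because `α_n` eventually exceeds `|z|`. Hence the series defining `F(z)[u]` is Lipschitz in
`u` for the seminorm `u ↦ ‖ρ u‖`, and the normalisation `N(|z|)` is a constant factor. The same
argument with `ρ_g` in place of `ρ_f` handles `G(z)`.
-/

open MeasureTheory Filter
open scoped ENNReal

noncomputable section

/-- The generalized factorial: `α_0! = 1`, `α_k! = α_1 ⋯ α_k`. -/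
def alphaFact (α : ℕ → ℝ) : ℕ → ℝ
  | 0 => 1
  | n + 1 => alphaFact α n * α (n + 1)

/-- The weak bi-coherent state functional
`F(z)[v] = N(|z|) Σ_n (conj(z)ⁿ/α_n!) ⟨f_n, v⟩`, where
`N(|z|) = (Σ_k |z|^{2k}/(α_k!)²)^{-1/2}`. -/
def wbcs (α : ℕ → ℝ) (f : ℕ → ℝ → ℂ) (z : ℂ) (v : ℝ → ℂ) : ℂ :=
  (((∑' j : ℕ, ‖z‖ ^ (2 * j) / alphaFact α j ^ 2) ^
      (-(1 : ℝ) / 2) : ℝ) : ℂ) *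
    ∑' n : ℕ, ((starRingEnd ℂ) z) ^ n / (alphaFact α n : ℂ) *
      ∫ x : ℝ, (starRingEnd ℂ) (f n x) * v x

open scoped ComplexConjugate Topology

theorem summable_norm_pow_div_alphaFact {𝕜 : Type*} [RCLike 𝕜] {α : ℕ → ℝ} (hα : Monotone α)
    {x : 𝕜} (hx : ENNReal.ofReal ‖x‖ < ⨆ n, ENNReal.ofReal (α n)) :
    Summable fun n => ‖x ^ n / (alphaFact α n : 𝕜)‖ := by
  obtain ⟨N, hN⟩ := lt_iSup_iff.mp hx
  have hαN : 0 < α N := ENNReal.ofReal_pos.mp (hN.trans_le' bot_le)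
  have hxN : ‖x‖ < α N := (ENNReal.ofReal_lt_ofReal_iff hαN).mp hN
  refine summable_of_ratio_norm_eventually_le ((div_lt_one hαN).mpr hxN) ?_
  filter_upwards [eventually_ge_atTop N] with n hn
  have hαn : α N ≤ α (n + 1) := hα (hn.trans n.le_succ)
  have hpos : 0 < α (n + 1) := hαN.trans_le hαn
  rw [norm_norm, norm_norm, alphaFact, RCLike.ofReal_mul, pow_succ, mul_div_mul_comm, norm_mul,
    mul_comm, norm_div _ (α (n + 1) : 𝕜), RCLike.norm_ofReal, abs_of_pos hpos]
  gcongr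

section L2Pairing

variable {X : Type*} [MeasurableSpace X] {μ : Measure X} {p : ℝ≥0∞} {c w ρ u : X → ℂ}

theorem integral_conj_mul_eq_inner (hc : MemLp c 2 μ) (hw : MemLp w 2 μ) :
    ∫ x, conj (c x) * w x ∂μ = inner ℂ (hc.toLp c) (hw.toLp w) := by
  rw [L2.inner_def]
  refine integral_congr_ae ?_
  filter_upwards [hc.coeFn_toLp, hw.coeFn_toLp] with x hcx hwx
  rw [RCLike.inner_apply, hcx, hwx, mul_comm]

theorem integrable_conj_mul (hc : MemLp c 2 μ) (hw : MemLp w 2 μ) :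
    Integrable (fun x => conj (c x) * w x) μ :=
  (L2.integrable_inner (𝕜 := ℂ) (hc.toLp c) (hw.toLp w)).congr <| by
    filter_upwards [hc.coeFn_toLp, hw.coeFn_toLp] with x hcx hwx
    rw [RCLike.inner_apply, hcx, hwx, mul_comm]

theorem norm_integral_conj_mul_le (hc : MemLp c 2 μ) (hw : MemLp w 2 μ) :
    ‖∫ x, conj (c x) * w x ∂μ‖ ≤ (eLpNorm c 2 μ).toReal * (eLpNorm w 2 μ).toReal := by
  rw [integral_conj_mul_eq_inner hc hw, ← Lp.norm_toLp c hc, ← Lp.norm_toLp w hw]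
  exact norm_inner_le_norm _ _

theorem integral_conj_mul_self (hc : MemLp c 2 μ) :
    ∫ x, conj (c x) * c x ∂μ = ((eLpNorm c 2 μ).toReal ^ 2 : ℝ) := by
  rw [integral_conj_mul_eq_inner hc hc, inner_self_eq_norm_sq_to_K, Lp.norm_toLp]
  push_cast; rfl

/-- `ρ` need not be measurable: off the zeros of `u`, `conj ρ * u = conj (u ρ) * u / conj u`,
and on them both sides vanish. -/
theorem memLp_conj_mul_of_memLp_mul (hu : MemLp u p μ)
    (huρ : MemLp (fun x => u x * ρ x) p μ) : MemLp (fun x => conj (ρ x) * u x) p μ := by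
  have hquot : (fun x => conj (ρ x) * u x) = fun x => conj (u x * ρ x) * u x / conj (u x) := by
    funext x
    rcases eq_or_ne (u x) 0 with hx | hx
    · simp [hx]
    · have : conj (u x) ≠ 0 := (map_ne_zero _).mpr hx
      rw [map_mul]
      field_simp
  refine huρ.of_le ?_ (ae_of_all _ fun x => by simp [mul_comm])
  rw [hquot]
  have hu' := hu.aestronglyMeasurable.aemeasurable
  have huρ' := huρ.aestronglyMeasurable.aemeasurable
  exact AEMeasurable.aestronglyMeasurable (by fun_prop)

theorem eLpNorm_conj_mul_eq :
    eLpNorm (fun x => conj (ρ x) * u x) p μ = eLpNorm (fun x => u x * ρ x) p μ :=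
  eLpNorm_congr_norm_ae (ae_of_all _ fun x => by simp [mul_comm])

theorem integrable_conj_mul_weight_mul (hc : MemLp c 2 μ) (hu : MemLp u 2 μ)
    (huρ : MemLp (fun x => u x * ρ x) 2 μ) :
    Integrable (fun x => conj (c x * ρ x) * u x) μ := by
  simp only [map_mul, mul_assoc]
  exact integrable_conj_mul hc (memLp_conj_mul_of_memLp_mul hu huρ)

theorem norm_integral_conj_mul_weight_mul_le (hc : MemLp c 2 μ) (hu : MemLp u 2 μ)
    (huρ : MemLp (fun x => u x * ρ x) 2 μ) :
    ‖∫ x, conj (c x * ρ x) * u x ∂μ‖ ≤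
      (eLpNorm c 2 μ).toReal * (eLpNorm (fun x => u x * ρ x) 2 μ).toReal := by
  simp only [map_mul, mul_assoc]
  rw [← eLpNorm_conj_mul_eq]
  exact norm_integral_conj_mul_le hc (memLp_conj_mul_of_memLp_mul hu huρ)

end L2Pairing

theorem tendsto_tsum_mul_of_norm_sub_le {ι κ R : Type*} [NormedRing R] [CompleteSpace R]
    {l : Filter κ} {a : ι → R} (ha : Summable fun n => ‖a n‖) {b : κ → ι → R} {b₀ : ι → R}
    {B : ℝ} {ε : κ → ℝ} (hb₀ : ∀ n, ‖b₀ n‖ ≤ B) (hb : ∀ j n, ‖b j n - b₀ n‖ ≤ ε j)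
    (hε : Tendsto ε l (𝓝 0)) :
    Tendsto (fun j => ∑' n, a n * b j n) l (𝓝 (∑' n, a n * b₀ n)) := by
  have hsummable : ∀ (d : ι → R) (D : ℝ), (∀ n, ‖d n‖ ≤ D) → Summable fun n => a n * d n :=
    fun d D hd => (ha.mul_right D).of_norm_bounded fun n =>
      (norm_mul_le _ _).trans (mul_le_mul_of_nonneg_left (hd n) (norm_nonneg _))
  have hbB : ∀ j n, ‖b j n‖ ≤ B + ε j := fun j n => calc
    ‖b j n‖ ≤ ‖b₀ n‖ + ‖b j n - b₀ n‖ := norm_le_norm_add_norm_sub' _ _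
    _ ≤ B + ε j := add_le_add (hb₀ n) (hb j n)
  have hdist : ∀ j, ‖∑' n, a n * b j n - ∑' n, a n * b₀ n‖ ≤ (∑' n, ‖a n‖) * ε j := by
    intro j
    rw [← (hsummable _ _ (hbB j)).tsum_sub (hsummable _ _ hb₀)]
    refine tsum_of_norm_bounded (ha.hasSum.mul_right (ε j)) fun n => ?_
    rw [← mul_sub]
    exact (norm_mul_le _ _).trans (mul_le_mul_of_nonneg_left (hb j n) (norm_nonneg _))
  rw [tendsto_iff_norm_sub_tendsto_zero]
  refine squeeze_zero (fun _ => norm_nonneg _) hdist ?_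
  simpa using hε.const_mul (∑' n, ‖a n‖)

theorem tendsto_wbcs {c : ℕ → ℝ → ℂ} {C : ℝ} (hc : ∀ n, MemLp (c n) 2 volume)
    (hcC : ∀ n, (eLpNorm (c n) 2 volume).toReal ≤ C) {α : ℕ → ℝ} {z : ℂ}
    (hz : Summable fun n => ‖conj z ^ n / (alphaFact α n : ℂ)‖) {ρ v : ℝ → ℂ} {V : ℕ → ℝ → ℂ}
    (hv : MemLp v 2 volume) (hvρ : MemLp (fun x => v x * ρ x) 2 volume)
    (hV : ∀ j, MemLp (V j) 2 volume) (hVρ : ∀ j, MemLp (fun x => V j x * ρ x) 2 volume)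
    (hconv : Tendsto (fun j => eLpNorm (fun x => ρ x * (V j x - v x)) 2 volume) atTop (𝓝 0)) :
    Tendsto (fun j => wbcs α (fun n x => c n x * ρ x) z (V j)) atTop
      (𝓝 (wbcs α (fun n x => c n x * ρ x) z v)) := by
  have hdiff : ∀ j, MemLp (fun x => (V j x - v x) * ρ x) 2 volume := fun j => by
    simpa only [sub_mul, Pi.sub_def] using (hVρ j).sub hvρ
  have hpair_le : ∀ n {u : ℝ → ℂ}, MemLp u 2 volume → MemLp (fun x => u x * ρ x) 2 volume →
      ‖∫ x, conj (c n x * ρ x) * u x‖ ≤ C * (eLpNorm (fun x => u x * ρ x) 2 volume).toReal :=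
    fun n u hu huρ => (norm_integral_conj_mul_weight_mul_le (hc n) hu huρ).trans <|
      mul_le_mul_of_nonneg_right (hcC n) ENNReal.toReal_nonneg
  refine Tendsto.const_mul _ <| tendsto_tsum_mul_of_norm_sub_le hz (fun n => hpair_le n hv hvρ)
    (ε := fun j => C * (eLpNorm (fun x => ρ x * (V j x - v x)) 2 volume).toReal) (fun j n => ?_) ?_
  · rw [← integral_sub (integrable_conj_mul_weight_mul (hc n) (hV j) (hVρ j))
      (integrable_conj_mul_weight_mul (hc n) hv hvρ)]
    simp only [← mul_sub, mul_comm (ρ _)]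
    exact hpair_le n ((hV j).sub hv) (hdiff j)
  · simpa using ((ENNReal.tendsto_toReal ENNReal.zero_ne_top).comp hconv).const_mul C

theorem stmt18_general
    -- an orthonormal basis (c_n) of L²(ℝ):
    (c : ℕ → ℝ → ℂ)
    (hc2 : ∀ n, MemLp (c n) 2 (volume : Measure ℝ))
    (horth : ∀ n m : ℕ,
      (∫ x : ℝ, (starRingEnd ℂ) (c n x) * c m x) = if n = m then 1 else 0)
    -- the weights ρ_f and ρ_g = 1/conj(ρ_f):
    (ρf ρg : ℝ → ℂ)
    -- the deformed families f_n = c_n ρ_f and g_n = c_n ρ_g: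
    (f g : ℕ → ℝ → ℂ)
    (hf : ∀ n x, f n x = c n x * ρf x)
    (hg : ∀ n x, g n x = c n x * ρg x)
    -- the sequence α:
    (α : ℕ → ℝ) (hα : StrictMono α)
    (αbar : ℝ≥0∞) (hαbar : αbar = ⨆ n, ENNReal.ofReal (α n))
    -- z inside C_ᾱ(0):
    (z : ℂ) (hz : ENNReal.ofReal (‖z‖) < αbar)
    -- v and the sequence (v_j), all in V, with v_j → v in the topology τ_V:
    (v : ℝ → ℂ) (V : ℕ → ℝ → ℂ)
    (hv : MemLp v 2 (volume : Measure ℝ))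
    (hvf : MemLp (fun x => v x * ρf x) 2 (volume : Measure ℝ))
    (hvg : MemLp (fun x => v x * ρg x) 2 (volume : Measure ℝ))
    (hV : ∀ j, MemLp (V j) 2 (volume : Measure ℝ))
    (hVf : ∀ j, MemLp (fun x => V j x * ρf x) 2 (volume : Measure ℝ))
    (hVg : ∀ j, MemLp (fun x => V j x * ρg x) 2 (volume : Measure ℝ))
    (hconvf : Tendsto (fun j => eLpNorm (fun x => ρf x * (V j x - v x)) 2
      (volume : Measure ℝ)) atTop (nhds 0))
    (hconvg : Tendsto (fun j => eLpNorm (fun x => ρg x * (V j x - v x)) 2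
      (volume : Measure ℝ)) atTop (nhds 0)) :
    Tendsto (fun j => wbcs α f z (V j)) atTop (nhds (wbcs α f z v)) ∧
    Tendsto (fun j => wbcs α g z (V j)) atTop (nhds (wbcs α g z v)) := by
  obtain rfl : f = fun n x => c n x * ρf x := funext₂ hf
  obtain rfl : g = fun n x => c n x * ρg x := funext₂ hg
  subst hαbar
  have hc1 : ∀ n, (eLpNorm (c n) 2 volume).toReal ≤ 1 := fun n => by
    have hsq := integral_conj_mul_self (hc2 n)
    rw [horth, if_pos rfl] at hsq
    exact (sq_le_one_iff₀ ENNReal.toReal_nonneg).mp (by exact_mod_cast hsq.symm : _ = (1 : ℝ)).le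
  have hz' := summable_norm_pow_div_alphaFact hα.monotone (x := conj z) (by rwa [RCLike.norm_conj])
  exact ⟨tendsto_wbcs hc2 hc1 hz' hv hvf hV hVf hconvf,
    tendsto_wbcs hc2 hc1 hz' hv hvg hV hVg hconvg⟩

theorem stmt18
    -- an orthonormal basis (c_n) of L²(ℝ):
    (c : ℕ → ℝ → ℂ)
    (hc2 : ∀ n, MemLp (c n) 2 (volume : Measure ℝ))
    (horth : ∀ n m : ℕ,
      (∫ x : ℝ, (starRingEnd ℂ) (c n x) * c m x) = if n = m then 1 else 0)
    (hcomplete : ∀ h : ℝ → ℂ, MemLp h 2 (volume : Measure ℝ) →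
      (∀ n : ℕ, (∫ x : ℝ, (starRingEnd ℂ) (c n x) * h x) = 0) →
      h =ᵐ[volume] 0)
    -- the weights ρ_f and ρ_g = 1/conj(ρ_f):
    (ρf ρg : ℝ → ℂ) (hρf : Measurable ρf)
    (hρf0 : ∀ᵐ x : ℝ ∂volume, ρf x ≠ 0)
    (hρg : ∀ x, ρg x = ((starRingEnd ℂ) (ρf x))⁻¹)
    -- the deformed families f_n = c_n ρ_f and g_n = c_n ρ_g:
    (f g : ℕ → ℝ → ℂ)
    (hf : ∀ n x, f n x = c n x * ρf x)
    (hg : ∀ n x, g n x = c n x * ρg x)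
    -- the sequence α:
    (α : ℕ → ℝ) (hα : StrictMono α) (hα0 : α 0 = 0)
    (αbar : ℝ≥0∞) (hαbar : αbar = ⨆ n, ENNReal.ofReal (α n))
    -- z inside C_ᾱ(0):
    (z : ℂ) (hz : ENNReal.ofReal (‖z‖) < αbar)
    -- v and the sequence (v_j), all in V, with v_j → v in the topology τ_V:
    (v : ℝ → ℂ) (V : ℕ → ℝ → ℂ)
    (hv : MemLp v 2 (volume : Measure ℝ))
    (hvf : MemLp (fun x => v x * ρf x) 2 (volume : Measure ℝ))
    (hvg : MemLp (fun x => v x * ρg x) 2 (volume : Measure ℝ))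
    (hV : ∀ j, MemLp (V j) 2 (volume : Measure ℝ))
    (hVf : ∀ j, MemLp (fun x => V j x * ρf x) 2 (volume : Measure ℝ))
    (hVg : ∀ j, MemLp (fun x => V j x * ρg x) 2 (volume : Measure ℝ))
    (hconv : Tendsto (fun j => eLpNorm (fun x => V j x - v x) 2
      (volume : Measure ℝ)) atTop (nhds 0))
    (hconvf : Tendsto (fun j => eLpNorm (fun x => ρf x * (V j x - v x)) 2
      (volume : Measure ℝ)) atTop (nhds 0))
    (hconvg : Tendsto (fun j => eLpNorm (fun x => ρg x * (V j x - v x)) 2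
      (volume : Measure ℝ)) atTop (nhds 0)) :
    Tendsto (fun j => wbcs α f z (V j)) atTop (nhds (wbcs α f z v)) ∧
    Tendsto (fun j => wbcs α g z (V j)) atTop (nhds (wbcs α g z v)) :=
  stmt18_general c hc2 horth ρf ρg f g hf hg α hα αbar hαbar z hz v V hv hvf hvg hV hVf hVg hconvf
    hconvg

end
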